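/- arXiv:2110.11732 — 3 statements merged into one kernel-verified Lean document; each statement's English description precedes it below -/
import Mathlib

section
/- Let a and b be disjoint nonempty ordered sets. Every ordered partition (C_1,…,C_r) ∈ P_r(a ∪ b) can be written as α ⋓ β for a unique pair (α, β) ∈ P'_r(a) × P'_r(b), namely α = (C_1 ∩ a,…,C_r ∩ a) and β = (C_1 ∩ b,…,C_r ∩ b). Consequently the combinatorial join P(a) ∗_c P(b) := { α ⋓ β ∈ P_r(a ∪ b) : (α, β) ∈ P'_r(a) × P'_r(b), 1 ≤ r ≤ #a + #b } equals P(a ∪ b). (This realizes the identity P_m ∗_c P_n = P_{m+n} for permutahedra, whose faces are indexed by ordered partitions.) -/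
/-! Ordered sets are finite sets of (positive) integers, represented as `Finset ℕ`.
An augmented partition of `s` of length `n` is a list of `n` pairwise disjoint
(possibly empty) subsets of `s` whose union is `s`; an ordered partition additionally
has all blocks nonempty. -/

namespace Stmt1

/-- The union of the blocks of a list of finite sets. -/
def listUnion (L : List (Finset ℕ)) : Finset ℕ := L.foldr (· ∪ ·) ∅

/-- `L` is an augmented partition of `s` (of length `L.length`). -/
def IsAugPart (s : Finset ℕ) (L : List (Finset ℕ)) : Prop :=
  L.Pairwise Disjoint ∧ listUnion L = s

/-- `L` is an ordered partition of `s`. -/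
def IsOrdPart (s : Finset ℕ) (L : List (Finset ℕ)) : Prop :=
  IsAugPart s L ∧ ∀ X ∈ L, X ≠ ∅

/-!
Each block of `C` lies in `a ∪ b`, so it splits as `C_i = (C_i ∩ a) ∪ (C_i ∩ b)`.
Conversely, since `a` and `b` are disjoint, `A_i ⊆ a` and `B_i ⊆ b` force
`A_i = (A_i ∪ B_i) ∩ a` and `B_i = (A_i ∪ B_i) ∩ b`, which gives uniqueness.
An ordered partition of the nonempty set `a ∪ b` has between `1` and
`#(a ∪ b) = #a + #b` blocks, so it lies in the combinatorial join.
-/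

open Finset

section ZipUnion

variable {α : Type*} [DecidableEq α]

theorem map_inter_zipWith_union {a b : Finset α} (hab : Disjoint a b)
    {A B : List (Finset α)} (hlen : A.length = B.length)
    (hA : ∀ X ∈ A, X ⊆ a) (hB : ∀ Y ∈ B, Y ⊆ b) :
    (List.zipWith (· ∪ ·) A B).map (· ∩ a) = A := by
  refine List.ext_getElem (by simp [hlen]) fun i _ _ => ?_
  have hBa : B[i] ∩ a = ∅ :=
    disjoint_iff_inter_eq_empty.1 (hab.mono_right (hB _ (List.getElem_mem _))).symm
  simp [union_inter_distrib_right, inter_eq_left.2 (hA _ (List.getElem_mem _)), hBa]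

theorem zipWith_union_map_inter {a b : Finset α} {C : List (Finset α)}
    (hC : ∀ X ∈ C, X ⊆ a ∪ b) :
    List.zipWith (· ∪ ·) (C.map (· ∩ a)) (C.map (· ∩ b)) = C := by
  rw [List.zipWith_map, List.zipWith_self]
  refine (List.map_congr_left fun X hX => ?_).trans (List.map_id C)
  rw [← inter_union_distrib_left, inter_eq_left.2 (hC X hX), id]

end ZipUnion

theorem subset_listUnion_of_mem {L : List (Finset ℕ)} {X : Finset ℕ} (h : X ∈ L) :
    X ⊆ listUnion L := by
  induction L with
  | nil => simp at h
  | cons Y L ih =>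
    rcases List.mem_cons.1 h with rfl | h
    · exact subset_union_left
    · exact (ih h).trans subset_union_right

theorem listUnion_map_inter (L : List (Finset ℕ)) (a : Finset ℕ) :
    listUnion (L.map (· ∩ a)) = listUnion L ∩ a := by
  induction L with
  | nil => simp [listUnion]
  | cons Y L ih =>
    simp only [listUnion, List.map_cons, List.foldr_cons] at ih ⊢
    rw [ih, union_inter_distrib_right]

theorem disjoint_listUnion_right {L : List (Finset ℕ)} {X : Finset ℕ}
    (h : ∀ Y ∈ L, Disjoint X Y) : Disjoint X (listUnion L) := by
  induction L with
  | nil => simp [listUnion]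
  | cons Y L ih =>
    simp only [listUnion, List.foldr_cons, List.mem_cons, forall_eq_or_imp] at h ih ⊢
    exact disjoint_union_right.2 ⟨h.1, ih h.2⟩

theorem length_le_card_listUnion {L : List (Finset ℕ)} (hp : L.Pairwise Disjoint)
    (hne : ∀ X ∈ L, X ≠ ∅) : L.length ≤ (listUnion L).card := by
  induction L with
  | nil => simp
  | cons Y L ih =>
    rw [List.pairwise_cons] at hp
    simp only [List.mem_cons, forall_eq_or_imp] at hne
    have hcard : (listUnion (Y :: L)).card = Y.card + (listUnion L).card :=
      card_union_of_disjoint (disjoint_listUnion_right hp.1)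
    have hY : 0 < Y.card := card_pos.2 (nonempty_iff_ne_empty.2 hne.1)
    have := ih hp.2 hne.2
    simp only [List.length_cons]
    omega

theorem IsAugPart.subset {s : Finset ℕ} {L : List (Finset ℕ)} (h : IsAugPart s L)
    {X : Finset ℕ} (hX : X ∈ L) : X ⊆ s :=
  h.2 ▸ subset_listUnion_of_mem hX

theorem IsAugPart.map_inter {s : Finset ℕ} {L : List (Finset ℕ)} (h : IsAugPart s L)
    (a : Finset ℕ) : IsAugPart (s ∩ a) (L.map (· ∩ a)) :=
  ⟨h.1.map _ fun _ _ hXY => hXY.mono inter_subset_left inter_subset_left,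
    by rw [listUnion_map_inter, h.2]⟩

theorem IsOrdPart.length_le_card {s : Finset ℕ} {L : List (Finset ℕ)} (h : IsOrdPart s L) :
    L.length ≤ s.card :=
  h.1.2 ▸ length_le_card_listUnion h.1.1 h.2

theorem IsOrdPart.length_pos {s : Finset ℕ} {L : List (Finset ℕ)} (h : IsOrdPart s L)
    (hs : s.Nonempty) : 0 < L.length := by
  rcases L with _ | ⟨X, L⟩
  · exact absurd h.1.2.symm hs.ne_empty
  · simp

section Join

variable {a b : Finset ℕ}

theorem IsAugPart.map_inter_left {C : List (Finset ℕ)} (hC : IsAugPart (a ∪ b) C) :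
    IsAugPart a (C.map (· ∩ a)) := by
  simpa only [union_inter_cancel_left] using hC.map_inter a

theorem IsAugPart.map_inter_right {C : List (Finset ℕ)} (hC : IsAugPart (a ∪ b) C) :
    IsAugPart b (C.map (· ∩ b)) := by
  simpa only [union_inter_cancel_right] using hC.map_inter b

theorem IsAugPart.zipWith_union_map_inter {C : List (Finset ℕ)} (hC : IsAugPart (a ∪ b) C) :
    List.zipWith (· ∪ ·) (C.map (· ∩ a)) (C.map (· ∩ b)) = C :=
  Stmt1.zipWith_union_map_inter fun _ => hC.subset

theorem eq_map_inter_of_zipWith_union_eq (hab : Disjoint a b) {A B C : List (Finset ℕ)}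
    (hlen : A.length = B.length) (hA : IsAugPart a A) (hB : IsAugPart b B)
    (hC : List.zipWith (· ∪ ·) A B = C) :
    A = C.map (· ∩ a) ∧ B = C.map (· ∩ b) := by
  subst hC
  refine ⟨(map_inter_zipWith_union hab hlen (fun _ => hA.subset) fun _ => hB.subset).symm, ?_⟩
  rw [List.zipWith_comm]
  simp_rw [union_comm]
  exact (map_inter_zipWith_union hab.symm hlen.symm (fun _ => hB.subset) fun _ => hA.subset).symm

end Join

theorem statement1_general (a b : Finset ℕ) (hab : Disjoint a b)
    (ha : a.Nonempty) :
    (∀ (r : ℕ) (C : List (Finset ℕ)), C.length = r → IsOrdPart (a ∪ b) C →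
      (∃! p : List (Finset ℕ) × List (Finset ℕ),
        p.1.length = r ∧ IsAugPart a p.1 ∧ p.2.length = r ∧ IsAugPart b p.2 ∧
        List.zipWith (· ∪ ·) p.1 p.2 = C) ∧
      ((C.map (· ∩ a)).length = r ∧ IsAugPart a (C.map (· ∩ a)) ∧
       (C.map (· ∩ b)).length = r ∧ IsAugPart b (C.map (· ∩ b)) ∧
       List.zipWith (· ∪ ·) (C.map (· ∩ a)) (C.map (· ∩ b)) = C)) ∧
    {C : List (Finset ℕ) | ∃ r : ℕ, 1 ≤ r ∧ r ≤ a.card + b.card ∧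
        ∃ α β : List (Finset ℕ), α.length = r ∧ IsAugPart a α ∧
          β.length = r ∧ IsAugPart b β ∧
          C = List.zipWith (· ∪ ·) α β ∧ IsOrdPart (a ∪ b) C}
      = {C : List (Finset ℕ) | IsOrdPart (a ∪ b) C} := by
  have canonical : ∀ C, IsOrdPart (a ∪ b) C →
      (C.map (· ∩ a)).length = C.length ∧ IsAugPart a (C.map (· ∩ a)) ∧
      (C.map (· ∩ b)).length = C.length ∧ IsAugPart b (C.map (· ∩ b)) ∧
      List.zipWith (· ∪ ·) (C.map (· ∩ a)) (C.map (· ∩ b)) = C := fun C hC =>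
    ⟨List.length_map _, hC.1.map_inter_left, List.length_map _, hC.1.map_inter_right,
      hC.1.zipWith_union_map_inter⟩
  refine ⟨fun r C hr hC => ?_, Set.ext fun C => ⟨fun ⟨_, _, _, _, _, _, _, _, _, _, hC⟩ => hC,
    fun hC => ?_⟩⟩
  · subst hr
    refine ⟨⟨(C.map (· ∩ a), C.map (· ∩ b)), canonical C hC, ?_⟩, canonical C hC⟩
    rintro ⟨A, B⟩ ⟨hA, hAa, hB, hBb, hAB⟩
    obtain ⟨rfl, rfl⟩ := eq_map_inter_of_zipWith_union_eq hab (hA.trans hB.symm) hAa hBb hAB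
    rfl
  · have hcard : C.length ≤ a.card + b.card := card_union_of_disjoint hab ▸ hC.length_le_card
    obtain ⟨hlenA, hA, hlenB, hB, hzip⟩ := canonical C hC
    exact ⟨C.length, hC.length_pos (ha.mono subset_union_left), hcard, _, _,
      hlenA, hA, hlenB, hB, hzip.symm, hC⟩

/-- For disjoint nonempty ordered sets `a`, `b`, every ordered partition
`C ∈ P_r(a ∪ b)` is `α ⋓ β` for a unique `(α, β) ∈ P'_r(a) × P'_r(b)`, namely
`α = (C₁ ∩ a,…)`, `β = (C₁ ∩ b,…)`; consequently the combinatorial join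
`P(a) ∗_c P(b)` equals `P(a ∪ b)`. -/
theorem statement1 (a b : Finset ℕ) (hab : Disjoint a b)
    (ha : a.Nonempty) (hb : b.Nonempty) :
    (∀ (r : ℕ) (C : List (Finset ℕ)), C.length = r → IsOrdPart (a ∪ b) C →
      (∃! p : List (Finset ℕ) × List (Finset ℕ),
        p.1.length = r ∧ IsAugPart a p.1 ∧ p.2.length = r ∧ IsAugPart b p.2 ∧
        List.zipWith (· ∪ ·) p.1 p.2 = C) ∧
      ((C.map (· ∩ a)).length = r ∧ IsAugPart a (C.map (· ∩ a)) ∧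
       (C.map (· ∩ b)).length = r ∧ IsAugPart b (C.map (· ∩ b)) ∧
       List.zipWith (· ∪ ·) (C.map (· ∩ a)) (C.map (· ∩ b)) = C)) ∧
    {C : List (Finset ℕ) | ∃ r : ℕ, 1 ≤ r ∧ r ≤ a.card + b.card ∧
        ∃ α β : List (Finset ℕ), α.length = r ∧ IsAugPart a α ∧
          β.length = r ∧ IsAugPart b β ∧
          C = List.zipWith (· ∪ ·) α β ∧ IsOrdPart (a ∪ b) C}
      = {C : List (Finset ℕ) | IsOrdPart (a ∪ b) C} :=
  statement1_general a b hab ha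

end Stmt1
end

section
/- Fix n ≥ 1 and 1 ≤ k ≤ n. For an ordered partition (B_1,…,B_k) of {1,…,n}, define A_1 = {1,…,n} and A_{i+1} = A_i ∖ B_i, let (β_{i,1},…,β_{i,s_i}) = EP_{A_i}(B_i), and set n_{i,j} = #β_{i,j} + 1. Then the assignment (B_1,…,B_k) ↦ ((n_{i,1},…,n_{i,s_i}))_{1 ≤ i ≤ k} is a bijection from the set of ordered partitions of {1,…,n} of length k onto the set of sequences of tuples of positive integers ((n_{i,1},…,n_{i,s_i}))_{1 ≤ i ≤ k} satisfying: s_k = 1; s_i = n_{i+1,1} + ⋯ + n_{i+1,s_{i+1}} for 1 ≤ i < k; for each i there exists j with n_{i,j} ≥ 2; and Σ_{i,j} (n_{i,j} − 1) = n. (Such sequences are exactly the leaf decompositions of down-rooted planar leveled trees with n + 1 leaves and k levels, so ordered partitions of {1,…,n} are in bijection with planar leveled trees with n + 1 leaves.) -/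
/-! The embedding partition `EP_b(a)` of `a ⊆ b` is encoded in closed form: its blocks are
the intersections of `a` with the intervals cut out by the elements of `b ∖ a`.

For a fixed ambient set `A`, the list of block sizes of `EP_A(B)` determines `B ⊆ A`: the first
cut point is the element of `A` having exactly `#β₁` elements of `A` below it, and one recurses
above it. These size lists are exactly the lists `cs` with `∑ cs + length cs = #A + 1`, and there
are `2 ^ #A` of them (compositions of `#A + 1`), so `B ↦ sizes of EP_A(B)` is a bijection from the
subsets of `A`. Removing the first block `B₁` turns ordered partitions of `A` into `k + 1` blocks
into ordered partitions of `A ∖ B₁` into `k` blocks, and leaf sequences split the same way: the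
length `s₁ = #(A ∖ B₁) + 1` of the first tuple matches `n_{2,1} + ⋯ + n_{2,s₂} = #A₂ + 1`. -/

namespace Stmt3

/-- Split `a` along an increasing list of cut points. -/
def epBlocks (a : Finset ℕ) : List ℕ → List (Finset ℕ)
  | [] => [a]
  | d :: ds => (a.filter (fun x => x < d)) :: epBlocks (a.filter (fun x => d < x)) ds

/-- The embedding partition `EP_b(a)` of `a ⊆ b`. -/
def EP (b a : Finset ℕ) : List (Finset ℕ) :=
  epBlocks a ((b \ a).sort (· ≤ ·))

/-- Ordered partitions `(B₁,…,B_k)` of `{1,…,n}` of length `k`. -/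
def OrdPartFn (n k : ℕ) : Set (Fin k → Finset ℕ) :=
  {B | (∀ i, B i ≠ ∅) ∧ (∀ i j, i ≠ j → Disjoint (B i) (B j)) ∧
       Finset.univ.biUnion B = Finset.Icc 1 n}

/-- Sequences of tuples of positive integers `((n_{i,1},…,n_{i,s_i}))_{1 ≤ i ≤ k}`
satisfying: `s_k = 1`; `s_i = n_{i+1,1} + ⋯ + n_{i+1,s_{i+1}}` for `i < k`;
for each `i` some `n_{i,j} ≥ 2`; and `∑_{i,j} (n_{i,j} − 1) = n`.
These are exactly the leaf decompositions of down-rooted planar leveled trees with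
`n+1` leaves and `k` levels. -/
def LeafSeqs (n k : ℕ) : Set (Fin k → List ℕ) :=
  {L | (∀ i : Fin k, ∀ m ∈ L i, 1 ≤ m) ∧
       (∀ i : Fin k, (i : ℕ) = k - 1 → (L i).length = 1) ∧
       (∀ (i : Fin k) (h : (i : ℕ) + 1 < k), (L i).length = (L ⟨(i : ℕ) + 1, h⟩).sum) ∧
       (∀ i : Fin k, ∃ m ∈ L i, 2 ≤ m) ∧
       (∑ i : Fin k, ((L i).map (fun m => m - 1)).sum) = n}

open Finset

lemma sum_map_add_one (l : List ℕ) : (l.map (· + 1)).sum = l.sum + l.length := by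
  simp [List.sum_map_add]

lemma map_sub_one_map_add_one {l : List ℕ} (h : ∀ x ∈ l, 1 ≤ x) :
    (l.map (· - 1)).map (· + 1) = l := by
  rw [List.map_map, List.map_congr_left (g := id) fun x hx => by
    have := h x hx
    simp only [Function.comp_apply, id]
    omega]
  exact List.map_id l

lemma sum_map_sub_one_add_length {l : List ℕ} (h : ∀ x ∈ l, 1 ≤ x) :
    (l.map (· - 1)).sum + l.length = l.sum := by
  conv_rhs => rw [← map_sub_one_map_add_one h]
  rw [sum_map_add_one, List.length_map]

lemma length_epBlocks (a : Finset ℕ) (ds : List ℕ) :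
    (epBlocks a ds).length = ds.length + 1 := by
  induction ds generalizing a with
  | nil => rfl
  | cons d ds ih => simp [epBlocks, ih]

lemma sum_map_card_epBlocks (a : Finset ℕ) (ds : List ℕ) (h : ∀ d ∈ ds, d ∉ a) :
    ((epBlocks a ds).map card).sum = a.card := by
  induction ds generalizing a with
  | nil => simp [epBlocks]
  | cons d ds ih =>
    have hd : d ∉ a := h d List.mem_cons_self
    have hgt : a.filter (d < ·) = a.filter (fun x => ¬ x < d) :=
      filter_congr fun x hx => by have : x ≠ d := ne_of_mem_of_not_mem hx hd; omega
    rw [epBlocks, List.map_cons, List.sum_cons,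
      ih _ fun e he hea => h e (List.mem_cons_of_mem _ he) (mem_of_mem_filter _ hea),
      hgt, card_filter_add_card_filter_not]

lemma length_EP (A B : Finset ℕ) : (EP A B).length = (A \ B).card + 1 := by
  rw [EP, length_epBlocks, length_sort]

lemma sum_map_card_EP (A B : Finset ℕ) : ((EP A B).map card).sum = B.card :=
  sum_map_card_epBlocks _ _ fun _ hd => (mem_sdiff.1 ((mem_sort _).1 hd)).2

lemma EP_eq_cons {A B : Finset ℕ} {d : ℕ} (hBA : B ⊆ A) (hd : d ∈ A \ B)
    (hmin : ∀ x ∈ A \ B, d ≤ x) :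
    EP A B = A.filter (· < d) :: EP (A.filter (d < ·)) (B.filter (d < ·)) := by
  have hcuts : A \ B = insert d (A.filter (d < ·) \ B.filter (d < ·)) := by
    ext x
    have := hmin x
    simp only [mem_sdiff, mem_insert, mem_filter] at hd this ⊢
    constructor
    · intro hx
      rcases (this hx).lt_or_eq with h | h
      · exact Or.inr ⟨⟨hx.1, h⟩, fun h' => hx.2 h'.1⟩
      · exact Or.inl h.symm
    · rintro (rfl | ⟨⟨hxA, hdx⟩, hxB⟩)
      · exact hd
      · exact ⟨hxA, fun h => hxB ⟨h, hdx⟩⟩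
  have hlow : B.filter (· < d) = A.filter (· < d) := by
    ext x
    have := hmin x
    simp only [mem_filter, mem_sdiff] at this ⊢
    constructor
    · exact fun ⟨hx, hxd⟩ => ⟨hBA hx, hxd⟩
    · rintro ⟨hx, hxd⟩
      by_contra hxB
      exact absurd (this ⟨hx, fun h => hxB ⟨h, hxd⟩⟩) (by omega)
  rw [EP, hcuts, sort_insert _ (fun x hx => (mem_filter.1 (mem_sdiff.1 hx).1).2.le)
    (fun h => lt_irrefl d (mem_filter.1 (mem_sdiff.1 h).1).2), epBlocks, hlow, EP]

lemma strictMonoOn_card_filter_lt (A : Finset ℕ) :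
    StrictMonoOn (fun d => (A.filter (· < d)).card) A := by
  intro d hd e _ hde
  refine card_lt_card ((ssubset_iff_of_subset fun x hx => ?_).2 ⟨d, ?_, ?_⟩)
  · exact mem_filter.2 ⟨(mem_filter.1 hx).1, (mem_filter.1 hx).2.trans hde⟩
  · exact mem_filter.2 ⟨hd, hde⟩
  · simp

lemma mem_iff_of_lt_min'_sdiff {A B : Finset ℕ} (hBA : B ⊆ A) (h : (A \ B).Nonempty) {x : ℕ}
    (hx : x < (A \ B).min' h) : x ∈ B ↔ x ∈ A :=
  ⟨fun hxB => hBA hxB, fun hxA => by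
    by_contra hxB
    exact lt_irrefl x ((lt_min'_iff _ h).1 hx x (mem_sdiff.2 ⟨hxA, hxB⟩))⟩

theorem injOn_map_card_EP (A : Finset ℕ) :
    Set.InjOn (fun B => (EP A B).map card) (A.powerset : Set (Finset ℕ)) := by
  induction A using Finset.strongInduction with
  | H A ih =>
  intro B hB C hC h
  rw [coe_powerset, Set.mem_preimage, Set.mem_powerset_iff, coe_subset] at hB hC
  have hlen : (A \ B).card = (A \ C).card := by
    simpa [length_EP] using congrArg List.length h
  rcases (A \ B).eq_empty_or_nonempty with hAB | hAB
  · have hAC : A \ C = ∅ := card_eq_zero.1 (by rw [← hlen, hAB, card_empty])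
    rw [sdiff_eq_empty_iff_subset] at hAB hAC
    exact (hB.antisymm hAB).trans (hC.antisymm hAC).symm
  have hAC : (A \ C).Nonempty := card_pos.1 (hlen ▸ hAB.card_pos)
  have hd := min'_mem _ hAB
  have he := min'_mem _ hAC
  simp only [EP_eq_cons hB hd fun x => min'_le _ x, EP_eq_cons hC he fun x => min'_le _ x,
    List.map_cons, List.cons.injEq] at h
  have hde : (A \ B).min' hAB = (A \ C).min' hAC :=
    (strictMonoOn_card_filter_lt A).injOn (mem_sdiff.1 hd).1 (mem_sdiff.1 he).1 h.1
  set d := (A \ B).min' hAB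
  have hupper : B.filter (d < ·) = C.filter (d < ·) := by
    refine ih _ (filter_ssubset.2 ⟨d, (mem_sdiff.1 hd).1, lt_irrefl d⟩) ?_ ?_ ?_
    · exact mem_powerset.2 (filter_subset_filter _ hB)
    · exact mem_powerset.2 (filter_subset_filter _ hC)
    · simpa [hde] using h.2
  ext x
  rcases lt_trichotomy x d with hx | rfl | hx
  · rw [mem_iff_of_lt_min'_sdiff hB hAB hx, mem_iff_of_lt_min'_sdiff hC hAC (hde ▸ hx)]
  · rw [hde] at hd ⊢
    simp only [(mem_sdiff.1 hd).2, (mem_sdiff.1 he).2]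
  · simpa [hx] using congrArg (x ∈ ·) hupper

lemma mem_image_compositions_of_sum_add_length {m : ℕ} {cs : List ℕ}
    (h : cs.sum + cs.length = m + 1) :
    cs ∈ (univ : Finset (Composition (m + 1))).image fun c => c.blocks.map (· - 1) := by
  refine mem_image.2 ⟨⟨cs.map (· + 1), ?_, ?_⟩, mem_univ _, by simp [Function.comp_def]⟩
  · simp
  · simpa [sum_map_add_one] using h

theorem bijOn_map_card_EP (A : Finset ℕ) :
    Set.BijOn (fun B => (EP A B).map card) (A.powerset : Set (Finset ℕ))
      {cs | cs.sum + cs.length = A.card + 1} := by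
  have hmaps : Set.MapsTo (fun B => (EP A B).map card) (A.powerset : Set (Finset ℕ))
      {cs | cs.sum + cs.length = A.card + 1} := fun B hB => by
    have := card_sdiff_add_card_eq_card (mem_powerset.1 hB)
    simp only [Set.mem_ofPred_eq, sum_map_card_EP, List.length_map, length_EP]
    omega
  refine ⟨hmaps, injOn_map_card_EP A, fun cs hcs => ?_⟩
  -- both sides have `2 ^ #A` elements, so the injection is onto
  have himage : A.powerset.image (fun B => (EP A B).map card) =
      (univ : Finset (Composition (A.card + 1))).image fun c => c.blocks.map (· - 1) := by
    refine eq_of_subset_of_card_le (fun cs' hcs' => ?_) ?_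
    · obtain ⟨B, hB, rfl⟩ := mem_image.1 hcs'
      exact mem_image_compositions_of_sum_add_length (hmaps hB)
    · rw [card_image_of_injOn (injOn_map_card_EP A), card_powerset]
      exact card_image_le.trans (by simp [composition_card])
  obtain ⟨B, hB, rfl⟩ := mem_image.1 (himage ▸ mem_image_compositions_of_sum_add_length hcs)
  exact ⟨B, hB, rfl⟩

def OrdPart (A : Finset ℕ) (k : ℕ) : Set (Fin k → Finset ℕ) :=
  {B | (∀ i, B i ≠ ∅) ∧ (∀ i j, i ≠ j → Disjoint (B i) (B j)) ∧ Finset.univ.biUnion B = A}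

lemma biUnion_univ_cons {k : ℕ} (b : Finset ℕ) (B : Fin k → Finset ℕ) :
    univ.biUnion (Fin.cons b B : Fin (k + 1) → Finset ℕ) = b ∪ univ.biUnion B := by
  ext x
  simp [Fin.exists_fin_succ]

lemma cons_mem_ordPart_iff {A b : Finset ℕ} {k : ℕ} {B : Fin k → Finset ℕ} :
    (Fin.cons b B : Fin (k + 1) → Finset ℕ) ∈ OrdPart A (k + 1) ↔
      b ≠ ∅ ∧ b ⊆ A ∧ B ∈ OrdPart (A \ b) k := by
  have hdisj : (∀ i j, i ≠ j → Disjoint ((Fin.cons b B : Fin (k + 1) → Finset ℕ) i)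
      ((Fin.cons b B : Fin (k + 1) → Finset ℕ) j)) ↔
      (∀ j, Disjoint b (B j)) ∧ ∀ i j, i ≠ j → Disjoint (B i) (B j) := by
    have := pairwise_fin_succ_iff
      (R := Function.onFun Disjoint (Fin.cons b B : Fin (k + 1) → Finset ℕ))
    simp only [Pairwise, Function.onFun, Fin.cons_zero, Fin.cons_succ] at this
    rw [this]
    exact ⟨fun ⟨_, h0, h⟩ => ⟨h0, h⟩, fun ⟨h0, h⟩ => ⟨fun j => (h0 j).symm, h0, h⟩⟩
  simp only [OrdPart, Set.mem_ofPred_eq]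
  rw [hdisj, biUnion_univ_cons, Fin.forall_fin_succ]
  simp only [Fin.cons_zero, Fin.cons_succ]
  constructor
  · rintro ⟨⟨hb, hne⟩, ⟨hbB, hdisjB⟩, hunion⟩
    have hbU : Disjoint b (univ.biUnion B) := (disjoint_biUnion_right _ _ _).2 fun j _ => hbB j
    refine ⟨hb, hunion ▸ subset_union_left, hne, hdisjB, ?_⟩
    rw [← hunion, union_sdiff_cancel_left hbU]
  · rintro ⟨hb, hbA, hne, hdisjB, hunion⟩
    refine ⟨⟨hb, hne⟩, ⟨fun j => ?_, hdisjB⟩, by rw [hunion, union_sdiff_of_subset hbA]⟩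
    exact disjoint_sdiff.mono_right ((subset_biUnion_of_mem B (mem_univ j)).trans hunion.le)

def leafSeq (A : Finset ℕ) {k : ℕ} (B : Fin k → Finset ℕ) (i : Fin k) : List ℕ :=
  (EP (A \ (univ.filter (fun j => j < i)).biUnion B) (B i)).map (fun β => β.card + 1)

lemma leafSeq_cons (A b : Finset ℕ) {k : ℕ} (B : Fin k → Finset ℕ) :
    leafSeq A (Fin.cons b B : Fin (k + 1) → Finset ℕ) =
      Fin.cons (((EP A b).map card).map (· + 1)) (leafSeq (A \ b) B) := by
  funext i
  refine Fin.cases ?_ (fun j => ?_) i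
  · simp [leafSeq, Function.comp_def]
  · simp only [leafSeq, Fin.cons_succ, sdiff_sdiff_left]
    congr 3
    ext x
    simp [Fin.exists_fin_succ]

lemma tail_mem_leafSeqs {m k : ℕ} {L : Fin (k + 1) → List ℕ} (hL : L ∈ LeafSeqs m (k + 1)) :
    Fin.tail L ∈ LeafSeqs (∑ i, ((Fin.tail L i).map (· - 1)).sum) k := by
  obtain ⟨hpos, hlast, hadj, htwo, -⟩ := hL
  refine ⟨fun i => hpos i.succ, fun i hi => hlast i.succ ?_, fun i hi => hadj i.succ ?_,
    fun i => htwo i.succ, rfl⟩ <;> simp <;> omega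

lemma sum_head_of_mem_leafSeqs {m k : ℕ} {L : Fin (k + 1) → List ℕ}
    (hL : L ∈ LeafSeqs m (k + 1)) : (L 0).sum = m + 1 := by
  induction k generalizing m with
  | zero =>
    obtain ⟨hpos, hlast, -, -, hm⟩ := hL
    rw [← sum_map_sub_one_add_length (hpos 0), hlast 0 rfl, ← hm, Fin.sum_univ_one]
  | succ k ih =>
    have htail := ih (tail_mem_leafSeqs hL)
    obtain ⟨hpos, -, hadj, -, hm⟩ := hL
    rw [Fin.sum_univ_succ] at hm
    have hlen : (L 0).length = (Fin.tail L 0).sum := hadj 0 (by simp)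
    rw [← sum_map_sub_one_add_length (hpos 0), hlen, htail, ← hm]
    rfl

lemma sum_ne_zero_iff_exists_two_le_add_one {cs : List ℕ} :
    cs.sum ≠ 0 ↔ ∃ x ∈ cs.map (· + 1), 2 ≤ x := by
  simp [List.sum_eq_zero_iff, Nat.one_le_iff_ne_zero]

lemma cons_mem_leafSeqs_iff {m k : ℕ} {cs : List ℕ} {L : Fin k → List ℕ} :
    (Fin.cons (cs.map (· + 1)) L : Fin (k + 1) → List ℕ) ∈ LeafSeqs m (k + 1) ↔
      cs.sum ≠ 0 ∧ L ∈ LeafSeqs (cs.length - 1) k ∧ m + 1 = cs.sum + cs.length := by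
  have hsum := sum_map_add_one cs
  have hpred : (cs.map (· + 1)).map (· - 1) = cs := by simp [Function.comp_def]
  constructor
  · intro h
    have hhead := sum_head_of_mem_leafSeqs h
    have htail := tail_mem_leafSeqs h
    obtain ⟨-, -, -, htwo, hm⟩ := h
    rw [Fin.sum_univ_succ] at hm
    simp only [Fin.cons_zero, Fin.cons_succ, Fin.tail_cons, hpred, hsum] at hhead hm htail
    refine ⟨sum_ne_zero_iff_exists_two_le_add_one.2 (htwo 0), ?_, hhead.symm⟩
    convert htail using 2
    omega
  · rintro ⟨hcs, hL, hm⟩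
    have hlen : cs.length ≠ 0 := fun h0 => hcs (by rw [List.length_eq_zero_iff.1 h0]; rfl)
    obtain ⟨hpos, hlast, hadj, htwo, htot⟩ := id hL
    refine ⟨?pos, ?last, ?adj, ?two, ?tot⟩
    case pos => exact Fin.cases (by simp) hpos
    case two => exact Fin.cases (sum_ne_zero_iff_exists_two_le_add_one.1 hcs) htwo
    case last =>
      refine Fin.cases (fun hk => ?_) (fun i hi => hlast i (by simp at hi; omega))
      obtain rfl : k = 0 := by simpa using hk.symm
      simp only [Finset.univ_eq_empty, Finset.sum_empty] at htot
      simp only [Fin.cons_zero, List.length_map]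
      omega
    case adj =>
      refine Fin.cases (fun hk => ?_) (fun i hi => hadj i (by simpa using hi))
      obtain ⟨k, rfl⟩ := Nat.exists_eq_succ_of_ne_zero (by simp at hk; omega : k ≠ 0)
      have := sum_head_of_mem_leafSeqs hL
      change (cs.map (· + 1)).length = (L 0).sum
      rw [List.length_map]
      omega
    case tot =>
      rw [Fin.sum_univ_succ]
      simp only [Fin.cons_zero, Fin.cons_succ, hpred, htot]
      omega

lemma eq_cons_map_add_one_of_forall_one_le {k : ℕ} {L : Fin (k + 1) → List ℕ}
    (h : ∀ x ∈ L 0, 1 ≤ x) : L = Fin.cons (((L 0).map (· - 1)).map (· + 1)) (Fin.tail L) := by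
  rw [map_sub_one_map_add_one h, Fin.cons_self_tail]

lemma bijOn_leafSeq_zero (A : Finset ℕ) :
    Set.BijOn (leafSeq A) (OrdPart A 0) (LeafSeqs A.card 0) := by
  refine ⟨fun B hB => ?_, fun B _ C _ _ => Subsingleton.elim B C, fun L hL => ?_⟩
  · refine ⟨finZeroElim, finZeroElim, fun i => i.elim0, finZeroElim, ?_⟩
    simp [← hB.2.2]
  · have hA : A = ∅ := card_eq_zero.1 (by simpa using hL.2.2.2.2.symm)
    exact ⟨finZeroElim, ⟨finZeroElim, finZeroElim, by simp [hA]⟩, funext finZeroElim⟩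

lemma bijOn_leafSeq_succ {k : ℕ}
    (ih : ∀ A : Finset ℕ, Set.BijOn (leafSeq A) (OrdPart A k) (LeafSeqs A.card k))
    (A : Finset ℕ) : Set.BijOn (leafSeq A) (OrdPart A (k + 1)) (LeafSeqs A.card (k + 1)) := by
  refine ⟨fun B hB => ?_, fun B hB C hC h => ?_, fun L hL => ?_⟩
  · rw [← Fin.cons_self_tail B, cons_mem_ordPart_iff] at hB
    obtain ⟨hb, hbA, htail⟩ := hB
    have hcard := card_sdiff_add_card_eq_card hbA
    rw [← Fin.cons_self_tail B, leafSeq_cons, cons_mem_leafSeqs_iff, List.length_map, length_EP,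
      sum_map_card_EP, Nat.add_sub_cancel]
    exact ⟨card_ne_zero.2 (nonempty_iff_ne_empty.2 hb), (ih _).mapsTo htail, by omega⟩
  · rw [← Fin.cons_self_tail B, cons_mem_ordPart_iff] at hB
    rw [← Fin.cons_self_tail C, cons_mem_ordPart_iff] at hC
    rw [← Fin.cons_self_tail B, ← Fin.cons_self_tail C, leafSeq_cons, leafSeq_cons,
      Fin.cons_inj] at h
    rw [← Fin.cons_self_tail B, ← Fin.cons_self_tail C, Fin.cons_inj]
    have hhead : B 0 = C 0 := (bijOn_map_card_EP A).injOn (by simpa using hB.2.1)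
      (by simpa using hC.2.1) (List.map_injective_iff.2 (add_left_injective 1) h.1)
    rw [hhead] at h hB
    exact ⟨hhead, (ih _).injOn hB.2.2 hC.2.2 h.2⟩
  · have hL0 := eq_cons_map_add_one_of_forall_one_le (hL.1 0)
    generalize (L 0).map (· - 1) = cs at hL0
    rw [hL0, cons_mem_leafSeqs_iff] at hL
    obtain ⟨hcs, htail, hm⟩ := hL
    obtain ⟨b, hbA, hb : (EP A b).map card = cs⟩ :=
      (bijOn_map_card_EP A).surjOn (hm.symm : cs.sum + cs.length = A.card + 1)
    have hlen : cs.length - 1 = (A \ b).card := by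
      rw [← hb, List.length_map, length_EP, Nat.add_sub_cancel]
    obtain ⟨B, hB, hBL⟩ := (ih (A \ b)).surjOn (hlen ▸ htail)
    have hb0 : b ≠ ∅ := by
      rw [← hb, sum_map_card_EP] at hcs
      exact nonempty_iff_ne_empty.1 (card_ne_zero.1 hcs)
    refine ⟨Fin.cons b B, cons_mem_ordPart_iff.2 ⟨hb0, by simpa using hbA, hB⟩, ?_⟩
    rw [leafSeq_cons, hb, hBL, ← hL0]

theorem bijOn_leafSeq (A : Finset ℕ) (k : ℕ) :
    Set.BijOn (leafSeq A) (OrdPart A k) (LeafSeqs A.card k) := by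
  induction k generalizing A with
  | zero => exact bijOn_leafSeq_zero A
  | succ k ih => exact bijOn_leafSeq_succ ih A

theorem statement3_general (n k : ℕ) :
    Set.BijOn
      (fun (B : Fin k → Finset ℕ) (i : Fin k) =>
        (EP (Finset.Icc 1 n \ (Finset.univ.filter (fun j => j < i)).biUnion B) (B i)).map
          (fun β => β.card + 1))
      (OrdPartFn n k) (LeafSeqs n k) := by
  have h := bijOn_leafSeq (Finset.Icc 1 n) k
  rwa [Nat.card_Icc, Nat.add_sub_cancel] at h

/-- With `A₁ = {1,…,n}`, `A_{i+1} = A_i ∖ B_i`, and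
`(β_{i,1},…,β_{i,s_i}) = EP_{A_i}(B_i)`, `n_{i,j} = #β_{i,j} + 1`, the assignment
`(B₁,…,B_k) ↦ ((n_{i,1},…,n_{i,s_i}))_i` is a bijection from ordered partitions of
`{1,…,n}` of length `k` onto the set of admissible leaf-sequence data. -/
theorem statement3 (n k : ℕ) (hn : 1 ≤ n) (hk : 1 ≤ k) (hkn : k ≤ n) :
    Set.BijOn
      (fun (B : Fin k → Finset ℕ) (i : Fin k) =>
        (EP (Finset.Icc 1 n \ (Finset.univ.filter (fun j => j < i)).biUnion B) (B i)).map
          (fun β => β.card + 1))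
      (OrdPartFn n k) (LeafSeqs n k) :=
  statement3_general n k

end Stmt3
end

section
/- Let R be a commutative ring with unity, let g: A → B be a chain map of chain complexes of R-modules, and fix n ≥ 1. Suppose g^{⊗n} maps A^{⊗n} isomorphically onto a subcomplex of B^{⊗n}, and there is a subcomplex X(n) ⊆ B^{⊗n} with B^{⊗n} = g^{⊗n}(A^{⊗n}) ⊕ X(n) as chain complexes and with H_∗ Hom(A^{⊗k}, X(n)) = 0 for all k ≥ 1. Then for every m ≥ 1 the chain map g̃: Hom(A^{⊗m}, A^{⊗n}) → Hom(A^{⊗m}, B^{⊗n}) defined by g̃(u) = g^{⊗n} ∘ u induces an isomorphism on homology of the Hom-complexes. -/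
namespace HomCx

/-- A ℤ-graded `R`-module with a family of maps `d p q : X p →ₗ X q`
(intended to vanish unless `q = p − 1`); chain complexes are those satisfying
`IsComplex`. -/
structure GCx (R : Type) [CommRing R] where
  X : ℤ → Type
  [grp : ∀ p, AddCommGroup (X p)]
  [mod : ∀ p, Module R (X p)]
  d : ∀ p q : ℤ, X p →ₗ[R] X q

attribute [instance] GCx.grp GCx.mod

variable {R : Type} [CommRing R]

/-- `A` is a chain complex: `d p q = 0` unless `q = p − 1`, and `d ∘ d = 0`. -/
def IsComplex (A : GCx R) : Prop :=
  (∀ p q : ℤ, q + 1 ≠ p → A.d p q = 0) ∧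
  (∀ p q r : ℤ, ∀ x : A.X p, A.d q r (A.d p q x) = 0)

/-- Degree-zero graded maps `A → B`. -/
abbrev CMap (A B : GCx R) : Type := ∀ p : ℤ, A.X p →ₗ[R] B.X p

/-- `g` is a chain map. -/
def IsChainMap {A B : GCx R} (g : CMap A B) : Prop :=
  ∀ p q : ℤ, ∀ x : A.X p, B.d p q (g p x) = g q (A.d p q x)

/-- Transport along an equality of degrees. -/
def xcast (B : GCx R) {u v : ℤ} (h : u = v) : B.X u →ₗ[R] B.X v := by
  subst h; exact LinearMap.id

/-- The tensor product of graded modules: `(A ⊗ B)_k = ⊕_{p} A_p ⊗ B_{k−p}` with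
differential `d_A ⊗ 1 + (−1)^p ⊗ d_B` (Koszul sign). -/
noncomputable def tensorCx (A B : GCx R) : GCx R where
  X k := DirectSum ℤ fun p => TensorProduct R (A.X p) (B.X (k - p))
  d k j := DirectSum.toModule R ℤ _ fun p =>
    ((DirectSum.lof R ℤ (fun p' => TensorProduct R (A.X p') (B.X (j - p'))) (p + j - k)).comp
        (TensorProduct.map (A.d p (p + j - k)) (xcast B (by ring))))
      + (((Int.negOnePow p : ℤ) : R) •
        ((DirectSum.lof R ℤ (fun p' => TensorProduct R (A.X p') (B.X (j - p'))) p).comp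
          (TensorProduct.map LinearMap.id (B.d (k - p) (j - p)))))

/-- The tensor product of graded maps. -/
noncomputable def tensorMap {A A' B B' : GCx R} (f : CMap A A') (g : CMap B B') :
    CMap (tensorCx A B) (tensorCx A' B') := fun k =>
  DirectSum.toModule R ℤ _ fun p =>
    (DirectSum.lof R ℤ (fun p' => TensorProduct R (A'.X p') (B'.X (k - p'))) p).comp
      (TensorProduct.map (f p) (g (k - p)))

/-- `tpow A n = A^{⊗(n+1)}`, so that `n` ranges over tensor powers `≥ 1`. -/
noncomputable def tpow (A : GCx R) : ℕ → GCx R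
  | 0 => A
  | n + 1 => tensorCx (tpow A n) A

/-- `tpowMap g n = g^{⊗(n+1)} : A^{⊗(n+1)} → B^{⊗(n+1)}`. -/
noncomputable def tpowMap {A B : GCx R} (g : CMap A B) : (n : ℕ) → CMap (tpow A n) (tpow B n)
  | 0 => g
  | n + 1 => tensorMap (tpowMap g n) g

/-- The degree-`k` component of the Hom-complex `Hom(A, B)`:
`Hom(A,B)_k = Π_p Hom_R(A_p, B_{p+k})`. -/
abbrev homCx (A B : GCx R) (k : ℤ) : Type := ∀ p : ℤ, A.X p →ₗ[R] B.X (p + k)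

/-- The Hom-complex differential `∇f = d_B ∘ f − (−1)^k f ∘ d_A`, recorded with two
indices (`nabla A B k j` vanishes unless `j = k − 1`, where it is the differential
`Hom(A,B)_k → Hom(A,B)_{k−1}`). -/
noncomputable def nabla (A B : GCx R) (k j : ℤ) (f : homCx A B k) : homCx A B j :=
  fun p =>
    (B.d (p + k) (p + j)).comp (f p)
      - ((Int.negOnePow k : ℤ) : R) •
          ((xcast B (by ring : p + j - k + k = p + j)).comp
            ((f (p + j - k)).comp (A.d p (p + j - k))))

/-- `g̃ u = g ∘ u : Hom(A, B₁)_k → Hom(A, B₂)_k` for `g : B₁ → B₂`. -/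
noncomputable def tilde (A : GCx R) {B₁ B₂ : GCx R} (g : CMap B₁ B₂) (k : ℤ)
    (u : homCx A B₁ k) : homCx A B₂ k := fun p => (g (p + k)).comp (u p)

/-- `g` induces an isomorphism on homology in every degree (stated elementarily via
cycles and boundaries). -/
def IsQuasiIso {A B : GCx R} (g : CMap A B) : Prop :=
  ∀ p : ℤ,
    (∀ x : A.X p, A.d p (p - 1) x = 0 →
      (∃ z : B.X (p + 1), g p x = B.d (p + 1) p z) →
      ∃ w : A.X (p + 1), x = A.d (p + 1) p w) ∧
    (∀ y : B.X p, B.d p (p - 1) y = 0 →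
      ∃ x : A.X p, A.d p (p - 1) x = 0 ∧
        ∃ z : B.X (p + 1), g p x - y = B.d (p + 1) p z)

/-- The map `g̃ = (g ∘ −) : Hom(A, B₁) → Hom(A, B₂)` induces an isomorphism on
homology of the Hom-complexes in every degree (stated elementarily via cycles and
boundaries). -/
def TildeHomologyIso (A B₁ B₂ : GCx R) (g : CMap B₁ B₂) : Prop :=
  ∀ k : ℤ,
    (∀ u : homCx A B₁ k, nabla A B₁ k (k - 1) u = 0 →
      (∃ w : homCx A B₂ (k + 1), nabla A B₂ (k + 1) k w = tilde A g k u) →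
      ∃ v : homCx A B₁ (k + 1), nabla A B₁ (k + 1) k v = u) ∧
    (∀ u' : homCx A B₂ k, nabla A B₂ k (k - 1) u' = 0 →
      ∃ u : homCx A B₁ k, nabla A B₁ k (k - 1) u = 0 ∧
        ∃ w : homCx A B₂ (k + 1), tilde A g k u - u' = nabla A B₂ (k + 1) k w)

end HomCx

/-!
Let `G = g^{⊗n}` and let `π` be the projection of `B^{⊗n}` onto `A^{⊗n}` along `X(n)`.
Since both summands are subcomplexes, `π` is a chain map with `π ∘ G = id`, so `π̃` is a
left inverse of `G̃` on Hom-complexes and `G̃` is injective on homology. For surjectivity,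
a cycle `u'` is homologous to `G̃ (π̃ u')`: their difference is a cycle valued in `X(n)`,
hence a boundary by the acyclicity of `Hom(A^{⊗m}, X(n))`.
-/

namespace HomCx

variable {R : Type} [CommRing R]

lemma apply_xcast {B₁ B₂ : GCx R} (h : CMap B₁ B₂) {a b : ℤ} (e : a = b) (y : B₁.X a) :
    h b (xcast B₁ e y) = xcast B₂ e (h a y) := by
  subst e; rfl

lemma IsChainMap.tensorMap {A A' B B' : GCx R} {f : CMap A A'} {g : CMap B B'}
    (hf : IsChainMap f) (hg : IsChainMap g) : IsChainMap (tensorMap f g) := by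
  intro k j x
  suffices h : ((tensorCx A' B').d k j).comp (HomCx.tensorMap f g k)
      = (HomCx.tensorMap f g j).comp ((tensorCx A B).d k j) from LinearMap.congr_fun h x
  refine DirectSum.linearMap_ext _ fun p => TensorProduct.ext' fun a b => ?_
  unfold HomCx.tensorMap tensorCx
  simp only [LinearMap.comp_apply, DirectSum.toModule_lof,
    LinearMap.add_apply, LinearMap.smul_apply, TensorProduct.map_tmul, map_add, map_smul,
    LinearMap.id_coe, id_eq]
  rw [hf p (p + j - k) a, hg (k - p) (j - p) b, apply_xcast g]

lemma IsChainMap.tpowMap {A B : GCx R} {g : CMap A B} (hg : IsChainMap g) :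
    ∀ n, IsChainMap (tpowMap g n)
  | 0 => hg
  | n + 1 => (hg.tpowMap n).tensorMap hg

section Hom

variable (A : GCx R) {B₁ B₂ : GCx R}

lemma nabla_tilde {h : CMap B₁ B₂} (hh : IsChainMap h) (k j : ℤ) (u : homCx A B₁ k) :
    nabla A B₂ k j (tilde A h k u) = tilde A h j (nabla A B₁ k j u) := by
  funext p; ext x
  simp only [nabla, tilde, LinearMap.sub_apply, LinearMap.comp_apply, LinearMap.smul_apply,
    map_sub, map_smul]
  rw [hh (p + k) (p + j), apply_xcast h]

lemma nabla_sub (B : GCx R) (k j : ℤ) (u v : homCx A B k) :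
    nabla A B k j (u - v) = nabla A B k j u - nabla A B k j v := by
  funext p; ext x
  simp only [nabla, Pi.sub_apply, LinearMap.sub_apply, LinearMap.comp_apply,
    LinearMap.smul_apply, map_sub, smul_sub]
  abel

@[simp]
lemma tilde_zero (h : CMap B₁ B₂) (k : ℤ) : tilde A h k (0 : homCx A B₁ k) = 0 := by
  funext p; ext x; simp [tilde]

variable {G : CMap B₁ B₂} {π : CMap B₂ B₁}

lemma exists_nabla_eq_of_tilde_eq_nabla (hπ : IsChainMap π) (hπG : ∀ p x, π p (G p x) = x)
    {k : ℤ} (u : homCx A B₁ k) (w : homCx A B₂ (k + 1))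
    (hw : nabla A B₂ (k + 1) k w = tilde A G k u) :
    ∃ v : homCx A B₁ (k + 1), nabla A B₁ (k + 1) k v = u := by
  refine ⟨tilde A π (k + 1) w, ?_⟩
  rw [nabla_tilde A hπ, hw]
  funext p; ext x
  exact hπG _ _

lemma exists_cycle_tilde_sub_eq_nabla (hG : IsChainMap G) (hπ : IsChainMap π)
    (S : ∀ p, Submodule R (B₂.X p)) (hS : ∀ p y, G p (π p y) - y ∈ S p)
    (hacyclic : ∀ (z : ℤ) (u : homCx A B₂ z), (∀ p x, u p x ∈ S (p + z)) →
      nabla A B₂ z (z - 1) u = 0 → ∃ w : homCx A B₂ (z + 1), nabla A B₂ (z + 1) z w = u)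
    {k : ℤ} (u' : homCx A B₂ k) (hu' : nabla A B₂ k (k - 1) u' = 0) :
    ∃ u : homCx A B₁ k, nabla A B₁ k (k - 1) u = 0 ∧
      ∃ w : homCx A B₂ (k + 1), tilde A G k u - u' = nabla A B₂ (k + 1) k w := by
  have hu : nabla A B₁ k (k - 1) (tilde A π k u') = 0 := by
    rw [nabla_tilde A hπ, hu', tilde_zero]
  refine ⟨tilde A π k u', hu, ?_⟩
  obtain ⟨w, hw⟩ := hacyclic k (tilde A G k (tilde A π k u') - u') (fun p x => hS _ _) (by
    rw [nabla_sub, nabla_tilde A hG, hu, hu', tilde_zero, sub_zero])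
  exact ⟨w, hw.symm⟩

end Hom

section Projection

variable {B₁ B₂ : GCx R} {G : CMap B₁ B₂} (hinj : ∀ p, Function.Injective (G p))
  (S : ∀ p, Submodule R (B₂.X p)) (hcompl : ∀ p, IsCompl (LinearMap.range (G p)) (S p))

lemma apply_linearProjOfIsCompl_sub_mem (p : ℤ) (y : B₂.X p) :
    G p (LinearMap.linearProjOfIsCompl (S p) (G p) (hinj p) (hcompl p) y) - y ∈ S p := by
  have h : G p (LinearMap.linearProjOfIsCompl (S p) (G p) (hinj p) (hcompl p) y) - y ∈
      LinearMap.ker (LinearMap.linearProjOfIsCompl (S p) (G p) (hinj p) (hcompl p)) := by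
    rw [LinearMap.mem_ker, map_sub, LinearMap.linearProjOfIsCompl_apply_left, sub_self]
  rwa [LinearMap.ker_linearProjOfIsCompl] at h

lemma IsChainMap.linearProjOfIsCompl (hG : IsChainMap G)
    (hSd : ∀ p q : ℤ, ∀ x, x ∈ S p → B₂.d p q x ∈ S q) :
    IsChainMap fun p => LinearMap.linearProjOfIsCompl (S p) (G p) (hinj p) (hcompl p) := by
  intro p q y
  set π : CMap B₂ B₁ := fun p => LinearMap.linearProjOfIsCompl (S p) (G p) (hinj p) (hcompl p)
  -- `y` and `G (π y)` differ by an element of the subcomplex `S = ker π`.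
  have hker : π q (B₂.d p q (G p (π p y) - y)) = 0 :=
    LinearMap.linearProjOfIsCompl_apply_right' _ _ _ _ _
      (hSd p q _ (apply_linearProjOfIsCompl_sub_mem hinj S hcompl p y))
  rw [map_sub, map_sub, hG, LinearMap.linearProjOfIsCompl_apply_left, sub_eq_zero] at hker
  exact hker

end Projection

theorem statement10_general (R : Type) [CommRing R] (A B : GCx R)
    (g : CMap A B) (hg : IsChainMap g) (n : ℕ)
    (hinj : ∀ p : ℤ, Function.Injective (tpowMap g n p))
    (S : ∀ p : ℤ, Submodule R ((tpow B n).X p))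
    (hSd : ∀ p q : ℤ, ∀ x, x ∈ S p → (tpow B n).d p q x ∈ S q)
    (hcompl : ∀ p : ℤ, IsCompl (LinearMap.range (tpowMap g n p)) (S p))
    (hacyclic : ∀ (k : ℕ) (z : ℤ) (u : homCx (tpow A k) (tpow B n) z),
      (∀ (p : ℤ) (x : (tpow A k).X p), u p x ∈ S (p + z)) →
      nabla (tpow A k) (tpow B n) z (z - 1) u = 0 →
      ∃ w : homCx (tpow A k) (tpow B n) (z + 1),
        (∀ (p : ℤ) (x : (tpow A k).X p), w p x ∈ S (p + (z + 1))) ∧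
        nabla (tpow A k) (tpow B n) (z + 1) z w = u) :
    ∀ m : ℕ, TildeHomologyIso (tpow A m) (tpow A n) (tpow B n) (tpowMap g n) := by
  intro m k
  have hG := hg.tpowMap n
  have hπ := hG.linearProjOfIsCompl hinj S hcompl hSd
  refine ⟨fun u _ ⟨w, hw⟩ => exists_nabla_eq_of_tilde_eq_nabla _ hπ
      (fun p => LinearMap.linearProjOfIsCompl_apply_left _ _ _ _) u w hw,
    exists_cycle_tilde_sub_eq_nabla _ hG hπ S
      (apply_linearProjOfIsCompl_sub_mem hinj S hcompl) fun z u hu hc => ?_⟩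
  obtain ⟨w, -, hw⟩ := hacyclic m z u hu hc
  exact ⟨w, hw⟩

/-- Let `g : A → B` be a chain map of chain complexes of
`R`-modules and fix `n` (here `tpow B n = B^{⊗(n+1)}`, so `n` ranges over all
exponents `≥ 1`).  Suppose `g^{⊗n}` maps `A^{⊗n}` isomorphically onto a subcomplex of
`B^{⊗n}` (componentwise injectivity; the image is a subcomplex since `g^{⊗n}` is a
chain map), and suppose there is a subcomplex `X(n) = S` of `B^{⊗n}` with
`B^{⊗n} = g^{⊗n}(A^{⊗n}) ⊕ X(n)` as chain complexes and with
`H_* Hom(A^{⊗k}, X(n)) = 0` for all `k ≥ 1` (every `∇`-cycle valued in `S` is the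
`∇`-boundary of an element valued in `S`).  Then for every `m ≥ 1` the chain map
`g̃ : Hom(A^{⊗m}, A^{⊗n}) → Hom(A^{⊗m}, B^{⊗n})`, `g̃(u) = g^{⊗n} ∘ u`, induces an
isomorphism on homology of the Hom-complexes. -/
theorem statement10 (R : Type) [CommRing R] (A B : GCx R)
    (hA : IsComplex A) (hB : IsComplex B)
    (g : CMap A B) (hg : IsChainMap g) (n : ℕ)
    (hinj : ∀ p : ℤ, Function.Injective (tpowMap g n p))
    (S : ∀ p : ℤ, Submodule R ((tpow B n).X p))
    (hSd : ∀ p q : ℤ, ∀ x, x ∈ S p → (tpow B n).d p q x ∈ S q)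
    (hcompl : ∀ p : ℤ, IsCompl (LinearMap.range (tpowMap g n p)) (S p))
    (hacyclic : ∀ (k : ℕ) (z : ℤ) (u : homCx (tpow A k) (tpow B n) z),
      (∀ (p : ℤ) (x : (tpow A k).X p), u p x ∈ S (p + z)) →
      nabla (tpow A k) (tpow B n) z (z - 1) u = 0 →
      ∃ w : homCx (tpow A k) (tpow B n) (z + 1),
        (∀ (p : ℤ) (x : (tpow A k).X p), w p x ∈ S (p + (z + 1))) ∧
        nabla (tpow A k) (tpow B n) (z + 1) z w = u) :
    ∀ m : ℕ, TildeHomologyIso (tpow A m) (tpow A n) (tpow B n) (tpowMap g n) :=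
  statement10_general R A B g hg n hinj S hSd hcompl hacyclic

end HomCx
end
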